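/- arXiv:1712.03938 — 2 statements merged into one kernel-verified Lean document; each statement's English description precedes it below -/
import Mathlib

section
/- Let $A = \mathbb{Q}[y_1,\ldots,y_n]$, let $M$ and $N$ be finite complexes of finitely generated free graded $A$-modules, and let $f : M \to N$ be a chain map. Suppose $H^*(M)$ is a free $A$-module. If the induced map on homology with coefficients $f^*_\nu : H^*(M \otimes_A \mathbb{Q}_\nu) \to H^*(N \otimes_A \mathbb{Q}_\nu)$ is injective for all generic $\nu$ (all $\nu$ with pairwise distinct coordinates), then $f^* : H^*(M) \to H^*(N)$ is injective. -/
/-! Freeness of `H(M)` makes every boundary module of `M` projective, by downward induction from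
the top of the finite complex; hence the cycles split off the chain module, and a nonzero class
`[z]` is detected by a cocycle `ℓ` (`ℓ D = 0`, `ℓ ⬝ᵥ z ≠ 0`). If `f^*[z] = 0`, choose a generic `ν`
at which the polynomial `ℓ ⬝ᵥ z` does not vanish. Generic injectivity gives `z(ν) = D(ν) u`, so
`(ℓ ⬝ᵥ z)(ν) = (ℓ(ν) D(ν)) ⬝ᵥ u = 0`, a contradiction. -/

set_option synthInstance.maxHeartbeats 1000000
set_option maxHeartbeats 1000000

open MvPolynomial

/-- `A = ℚ[y₁,…,y_n]`, positively graded with each `yᵢ` in degree `1`. -/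
abbrev Ay (n : ℕ) : Type := MvPolynomial (Fin n) ℚ

/-- A finite complex of finitely generated free graded `A`-modules, presented by
homogeneous matrices: in homological degree `k` the module is free on `r k`
generators, the `i`-th generator sitting in internal degree `g k i`, and the
differential `C_k → C_{k+1}` is given by the matrix `D k`, whose entries are
homogeneous of the appropriate degrees. -/
structure GradedFreeComplex (n : ℕ) where
  r : ℤ → ℕ
  bounded : ∃ N : ℕ, ∀ k : ℤ, (N : ℤ) < |k| → r k = 0
  g : ∀ k : ℤ, Fin (r k) → ℤ
  D : ∀ k : ℤ, Matrix (Fin (r (k + 1))) (Fin (r k)) (Ay n)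
  hom : ∀ k i j, (D k i j).IsHomogeneous (g k j - g (k + 1) i).toNat
  hneg : ∀ k i j, g k j < g (k + 1) i → D k i j = 0
  dd : ∀ k, D (k + 1) * D k = 0

namespace GradedFreeComplex

variable {n : ℕ} (C : GradedFreeComplex n)

/-- The cycles of the complex at homological position `k + 1`. -/
noncomputable def cycles (k : ℤ) : Submodule (Ay n) (Fin (C.r (k + 1)) → Ay n) :=
  LinearMap.ker (C.D (k + 1)).mulVecLin

/-- The boundaries, viewed inside the cycles at position `k + 1`. -/
noncomputable def boundaries (k : ℤ) : Submodule (Ay n) (C.cycles k) :=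
  (LinearMap.range (C.D k).mulVecLin).comap (C.cycles k).subtype

/-- The homology of the complex at position `k + 1`. -/
noncomputable def Hml (k : ℤ) : Type := C.cycles k ⧸ C.boundaries k

noncomputable instance (k : ℤ) : AddCommGroup (C.Hml k) :=
  inferInstanceAs (AddCommGroup (C.cycles k ⧸ C.boundaries k))
noncomputable instance (k : ℤ) : Module (Ay n) (C.Hml k) :=
  inferInstanceAs (Module (Ay n) (C.cycles k ⧸ C.boundaries k))
noncomputable instance (k : ℤ) : Module ℚ (C.Hml k) :=
  inferInstanceAs (Module ℚ (C.cycles k ⧸ C.boundaries k))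

/-- The degree-`m` graded piece of `A` (zero for `m < 0`). -/
noncomputable def pieceA (n : ℕ) (m : ℤ) : Submodule ℚ (Ay n) :=
  if m < 0 then ⊥ else homogeneousSubmodule (Fin n) ℚ m.toNat

/-- The internal-degree-`j` graded piece of the chain module at position `k`. -/
noncomputable def piece (k j : ℤ) : Submodule ℚ (Fin (C.r k) → Ay n) :=
  Submodule.pi Set.univ fun i => pieceA n (j - C.g k i)

/-- The internal-degree-`j` graded piece of the homology at position `k + 1`. -/
noncomputable def Hpiece (k j : ℤ) : Submodule ℚ (C.Hml k) :=
  ((C.piece (k + 1) j).comap ((C.cycles k).subtype.restrictScalars ℚ)).map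
    ((C.boundaries k).mkQ.restrictScalars ℚ)

/-- The specialization of the differential at a point `ν ∈ ℚⁿ`
(for `ν = 0` this is the complex `C₀ = C ⊗_A ℚ`). -/
noncomputable def Dspec (ν : Fin n → ℚ) (k : ℤ) :
    Matrix (Fin (C.r (k + 1))) (Fin (C.r k)) ℚ :=
  (C.D k).map (eval ν)

/-- The cycles of the specialized complex at position `k + 1`. -/
noncomputable def cyclesSpec (ν : Fin n → ℚ) (k : ℤ) :
    Submodule ℚ (Fin (C.r (k + 1)) → ℚ) :=
  LinearMap.ker (C.Dspec ν (k + 1)).mulVecLin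

/-- The homology of the specialized complex at position `k + 1`. -/
noncomputable def HmlSpec (ν : Fin n → ℚ) (k : ℤ) : Type :=
  C.cyclesSpec ν k ⧸
    ((LinearMap.range (C.Dspec ν k).mulVecLin).comap (C.cyclesSpec ν k).subtype)

noncomputable instance (ν : Fin n → ℚ) (k : ℤ) : AddCommGroup (C.HmlSpec ν k) :=
  inferInstanceAs (AddCommGroup (_ ⧸ _))
noncomputable instance (ν : Fin n → ℚ) (k : ℤ) : Module ℚ (C.HmlSpec ν k) :=
  inferInstanceAs (Module ℚ (_ ⧸ _))

/-- The internal-degree-`j` piece of the chain module of `C₀`: vectors supported on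
the generators of internal degree `j`. -/
noncomputable def piece0 (k j : ℤ) : Submodule ℚ (Fin (C.r k) → ℚ) :=
  Submodule.pi Set.univ fun i => if C.g k i = j then ⊤ else ⊥

/-- The internal-degree-`j` graded piece of the homology of `C₀` at position `k+1`. -/
noncomputable def H0piece (k j : ℤ) : Submodule ℚ (C.HmlSpec 0 k) :=
  ((C.piece0 (k + 1) j).comap (C.cyclesSpec 0 k).subtype).map
    ((LinearMap.range (C.Dspec 0 k).mulVecLin).comap (C.cyclesSpec 0 k).subtype).mkQ

end GradedFreeComplex

open Module LinearMap Matrix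

section SplitExact

variable {R M N P : Type*} [CommRing R] [AddCommGroup M] [AddCommGroup N] [AddCommGroup P]
  [Module R M] [Module R N] [Module R P]

theorem Function.Exact.exists_leftInverse_of_projective {f : M →ₗ[R] N} {g : N →ₗ[R] P}
    [Projective R P] (h : Function.Exact f g) (hf : Function.Injective f)
    (hg : Function.Surjective g) : ∃ l : N →ₗ[R] M, l ∘ₗ f = LinearMap.id := by
  obtain ⟨s, hs⟩ := g.exists_rightInverse_of_surjective (range_eq_top_of_surjective g hg)
  exact ⟨_, ((h.splitInjectiveEquiv hg).symm (h.splitSurjectiveEquiv hf ⟨s, hs⟩)).2⟩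

theorem LinearMap.exists_leftInverse_ker_subtype (g : N →ₗ[R] P) [Projective R (range g)] :
    ∃ ρ : N →ₗ[R] ker g, ρ ∘ₗ (ker g).subtype = LinearMap.id :=
  Function.Exact.exists_leftInverse_of_projective (g := g.rangeRestrict)
    (by rw [LinearMap.exact_iff, ker_rangeRestrict, Submodule.range_subtype])
    (ker g).injective_subtype g.surjective_rangeRestrict

theorem Submodule.projective_of_projective_quotient [Projective R N] (p : Submodule R N)
    [Projective R (N ⧸ p)] : Projective R p := by
  obtain ⟨ρ, hρ⟩ := (LinearMap.exact_subtype_mkQ p).exists_leftInverse_of_projective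
    p.injective_subtype p.mkQ_surjective
  exact .of_split p.subtype ρ hρ

variable {f : M →ₗ[R] N} {g : N →ₗ[R] P}

theorem LinearMap.projective_range_of_comp_eq_zero [Projective R N] (hgf : g ∘ₗ f = 0)
    [Projective R (range g)] [Projective R (ker g ⧸ (range f).comap (ker g).subtype)] :
    Projective R (range f) := by
  obtain ⟨ρ, hρ⟩ := g.exists_leftInverse_ker_subtype
  have : Projective R (ker g) := .of_split _ ρ hρ
  have := ((range f).comap (ker g).subtype).projective_of_projective_quotient
  exact .of_equiv' (Submodule.comapSubtypeEquivOfLe (range_le_ker_iff.mpr hgf))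

theorem LinearMap.exists_dual_comp_eq_zero_apply_ne_zero (hgf : g ∘ₗ f = 0)
    [Projective R (range g)] [Projective R (ker g ⧸ (range f).comap (ker g).subtype)]
    {z : N} (hz : g z = 0) (hzf : z ∉ range f) :
    ∃ L : Dual R N, L ∘ₗ f = 0 ∧ L z ≠ 0 := by
  obtain ⟨ρ, hρ⟩ := g.exists_leftInverse_ker_subtype
  have hρ_ker : ∀ x (hx : x ∈ ker g), ρ x = ⟨x, hx⟩ := fun x hx => LinearMap.congr_fun hρ ⟨x, hx⟩
  obtain ⟨φ, hφz, hφB⟩ := Submodule.exists_dual_map_eq_bot_of_notMem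
    (x := (⟨z, hz⟩ : ker g)) (p := (range f).comap (ker g).subtype) hzf inferInstance
  refine ⟨φ ∘ₗ ρ, LinearMap.ext fun x => ?_, by rwa [comp_apply, hρ_ker z hz]⟩
  have hfx : f x ∈ ker g := range_le_ker_iff.mpr hgf (mem_range_self f x)
  rw [comp_apply, comp_apply, hρ_ker _ hfx, zero_apply]
  have hB : (⟨f x, hfx⟩ : ker g) ∈ (range f).comap (ker g).subtype := mem_range_self f x
  exact (Submodule.mem_bot R).mp (hφB ▸ Submodule.mem_map_of_mem hB)

end SplitExact

theorem MvPolynomial.exists_injective_eval_ne_zero {R σ : Type*} [CommRing R] [IsDomain R]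
    [Infinite R] [Finite σ] {p : MvPolynomial σ R} (hp : p ≠ 0) :
    ∃ ν : σ → R, Function.Injective ν ∧ eval ν p ≠ 0 := by
  classical
  have := Fintype.ofFinite σ
  -- `Δ` vanishes exactly at the non-injective points
  set Δ : MvPolynomial σ R := ∏ ij ∈ Finset.univ.offDiag, (X ij.1 - X ij.2)
  have hΔ : Δ ≠ 0 := Finset.prod_ne_zero_iff.mpr fun ij hij =>
    sub_ne_zero.mpr fun h => (Finset.mem_offDiag.mp hij).2.2 (X_injective h)
  obtain ⟨ν, hν⟩ : ∃ ν, eval ν (p * Δ) ≠ 0 := by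
    by_contra! h
    exact mul_ne_zero hp hΔ (MvPolynomial.funext fun ν => by simp [h ν])
  rw [map_mul, mul_ne_zero_iff] at hν
  refine ⟨ν, fun i j hij => by_contra fun hne => hν.2 ?_, hν.1⟩
  simp only [Δ, map_prod, map_sub, eval_X]
  exact Finset.prod_eq_zero (i := (i, j)) (by simpa using hne) (sub_eq_zero.mpr hij)

section

variable {R S m l : Type*} [CommRing R] [CommRing S] (f : R →+* S)
  (A : Matrix m l R)

theorem RingHom.comp_mulVec [Fintype l] (v : l → R) : f ∘ (A *ᵥ v) = A.map f *ᵥ (f ∘ v) :=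
  funext (f.map_mulVec A v)

theorem RingHom.comp_vecMul [Fintype m] (v : m → R) : f ∘ (v ᵥ* A) = (f ∘ v) ᵥ* A.map f :=
  funext (f.map_vecMul A v)

end

namespace GradedFreeComplex

variable {n : ℕ} (C : GradedFreeComplex n)

theorem mulVecLin_comp_mulVecLin (k : ℤ) :
    (C.D (k + 1)).mulVecLin ∘ₗ (C.D k).mulVecLin = 0 := by
  rw [← Matrix.mulVecLin_mul, C.dd k, Matrix.mulVecLin_zero]

theorem projective_range_mulVecLin (hfree : ∀ k, Free (Ay n) (C.Hml k)) (k : ℤ) :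
    Projective (Ay n) (range (C.D k).mulVecLin) := by
  obtain ⟨N₀, hN₀⟩ := C.bounded
  have top : ∀ k : ℤ, N₀ ≤ k → Projective (Ay n) (range (C.D k).mulVecLin) := fun k hk => by
    have : IsEmpty (Fin (C.r (k + 1))) := by
      rw [hN₀ (k + 1) (by rw [abs_of_pos (by omega)]; omega)]; infer_instance
    infer_instance
  refine Int.inductionOn' k N₀ (top N₀ le_rfl) (fun k hk _ => top (k + 1) (by omega)) ?_
  intro k _ hk
  obtain ⟨m, rfl⟩ : ∃ m, k = m + 1 := ⟨k - 1, by ring⟩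
  have : Free (Ay n) (ker (C.D (m + 1)).mulVecLin ⧸
      (range (C.D m).mulVecLin).comap (ker (C.D (m + 1)).mulVecLin).subtype) := hfree m
  rw [add_sub_cancel_right]
  exact projective_range_of_comp_eq_zero (C.mulVecLin_comp_mulVecLin m)

theorem exists_vecMul_eq_zero_dotProduct_ne_zero (hfree : ∀ k, Free (Ay n) (C.Hml k)) {k : ℤ}
    {z : Fin (C.r (k + 1)) → Ay n} (hz : C.D (k + 1) *ᵥ z = 0) (hzB : ∀ u, C.D k *ᵥ u ≠ z) :
    ∃ ℓ, ℓ ᵥ* C.D k = 0 ∧ ℓ ⬝ᵥ z ≠ 0 := by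
  have := C.projective_range_mulVecLin hfree (k + 1)
  have : Free (Ay n) (ker (C.D (k + 1)).mulVecLin ⧸
      (range (C.D k).mulVecLin).comap (ker (C.D (k + 1)).mulVecLin).subtype) := hfree k
  obtain ⟨L, hLD, hLz⟩ := exists_dual_comp_eq_zero_apply_ne_zero (C.mulVecLin_comp_mulVecLin k)
    hz (by rintro ⟨u, hu⟩; exact hzB u hu)
  classical
  set ℓ := (dotProductEquiv (Ay n) _).symm L
  have hℓ : ∀ v, ℓ ⬝ᵥ v = L v := LinearMap.congr_fun ((dotProductEquiv _ _).apply_symm_apply L)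
  refine ⟨ℓ, funext fun j => ?_, by rwa [hℓ]⟩
  rw [Pi.zero_apply, ← dotProduct_single_one (ℓ ᵥ* C.D k), ← Matrix.dotProduct_mulVec, hℓ]
  exact LinearMap.congr_fun hLD _

end GradedFreeComplex

open GradedFreeComplex in
theorem homology_map_injective_of_generic_injective_general
    (n : ℕ) (M N : GradedFreeComplex n)
    (F : ∀ k : ℤ, Matrix (Fin (N.r k)) (Fin (M.r k)) (Ay n))
    (hfree : ∀ k : ℤ, Module.Free (Ay n) (M.Hml k))
    (hinj : ∀ ν : Fin n → ℚ, (∀ i j : Fin n, i ≠ j → ν i ≠ ν j) →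
      ∀ (k : ℤ) (z : Fin (M.r (k + 1)) → ℚ),
        (M.Dspec ν (k + 1)).mulVecLin z = 0 →
        (∃ w, ((F (k + 1)).map (MvPolynomial.eval ν)).mulVecLin z =
          (N.Dspec ν k).mulVecLin w) →
        ∃ u, (M.Dspec ν k).mulVecLin u = z) :
    ∀ (k : ℤ) (z : Fin (M.r (k + 1)) → Ay n),
      (M.D (k + 1)).mulVecLin z = 0 →
      (∃ w, (F (k + 1)).mulVecLin z = (N.D k).mulVecLin w) →
      ∃ u, (M.D k).mulVecLin u = z := by
  simp only [Matrix.mulVecLin_apply] at hinj ⊢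
  intro k z hz ⟨w, hw⟩
  by_contra! hzB
  obtain ⟨ℓ, hℓD, hℓz⟩ := M.exists_vecMul_eq_zero_dotProduct_ne_zero hfree hz hzB
  obtain ⟨ν, hν, hℓzν⟩ := MvPolynomial.exists_injective_eval_ne_zero hℓz
  obtain ⟨u, hu⟩ := hinj ν (fun _ _ => hν.ne) k (eval ν ∘ z)
    (by rw [Dspec, ← RingHom.comp_mulVec, hz]; rfl)
    ⟨eval ν ∘ w, by rw [Dspec, ← RingHom.comp_mulVec, ← RingHom.comp_mulVec, hw]⟩
  apply hℓzν
  calc eval ν (ℓ ⬝ᵥ z) = (eval ν ∘ ℓ) ⬝ᵥ (M.Dspec ν k *ᵥ u) := by rw [hu, RingHom.map_dotProduct]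
    _ = (eval ν ∘ (ℓ ᵥ* M.D k)) ⬝ᵥ u := by
      rw [Matrix.dotProduct_mulVec, Dspec, RingHom.comp_vecMul]
    _ = 0 := by simp [hℓD]

open GradedFreeComplex in
/-- Let `M`, `N` be finite complexes of finitely generated free graded modules over
`A = ℚ[y₁,…,y_n]` and `f : M → N` a (degree-preserving) chain map, given by the
homogeneous matrices `F k`.  Suppose `H^*(M)` is a free `A`-module.  If the induced
map `f^*_ν : H^*(M ⊗_A ℚ_ν) → H^*(N ⊗_A ℚ_ν)` is injective for every generic `ν`
(pairwise distinct coordinates) — i.e. every cycle of `M_ν` whose image is a boundary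
is itself a boundary — then `f^* : H^*(M) → H^*(N)` is injective. -/
theorem homology_map_injective_of_generic_injective
    (n : ℕ) (M N : GradedFreeComplex n)
    (F : ∀ k : ℤ, Matrix (Fin (N.r k)) (Fin (M.r k)) (Ay n))
    (Fchain : ∀ k : ℤ, F (k + 1) * M.D k = N.D k * F k)
    (Fhom : ∀ k i j, (F k i j).IsHomogeneous (M.g k j - N.g k i).toNat)
    (Fneg : ∀ k i j, M.g k j < N.g k i → F k i j = 0)
    (hfree : ∀ k : ℤ, Module.Free (Ay n) (M.Hml k))
    (hinj : ∀ ν : Fin n → ℚ, (∀ i j : Fin n, i ≠ j → ν i ≠ ν j) →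
      ∀ (k : ℤ) (z : Fin (M.r (k + 1)) → ℚ),
        (M.Dspec ν (k + 1)).mulVecLin z = 0 →
        (∃ w, ((F (k + 1)).map (MvPolynomial.eval ν)).mulVecLin z =
          (N.Dspec ν k).mulVecLin w) →
        ∃ u, (M.Dspec ν k).mulVecLin u = z) :
    ∀ (k : ℤ) (z : Fin (M.r (k + 1)) → Ay n),
      (M.D (k + 1)).mulVecLin z = 0 →
      (∃ w, (F (k + 1)).mulVecLin z = (N.D k).mulVecLin w) →
      ∃ u, (M.D k).mulVecLin u = z :=
  homology_map_injective_of_generic_injective_general n M N F hfree hinj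
end

section
/- In $\mathbb{Q}[x_1,\ldots,x_n,y_1,\ldots,y_n]$, the product of ideals $\mathcal{J}_{1,n}\mathcal{J}_{2,n}\cdots\mathcal{J}_{n-1,n}$, where $\mathcal{J}_{i,n} = (x_i - x_n,\, y_i - y_n)$, equals the intersection $\bigcap_{i=1}^{n-1} \mathcal{J}_{i,n}$. -/
open MvPolynomial

/-- Variables: `X (inl i) = xᵢ`, `X (inr i) = yᵢ`, for `i : Fin (n+1)`
(so there are `n+1` pairs of variables, the last one playing the role of `(x_n, y_n)`). -/
abbrev JMring (n : ℕ) : Type := MvPolynomial (Fin (n + 1) ⊕ Fin (n + 1)) ℚ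

/-- The ideal `𝒥_{i,n} = (xᵢ - x_n, yᵢ - y_n)` for `i < n`. -/
noncomputable def Jin (n : ℕ) (i : Fin n) : Ideal (JMring n) :=
  Ideal.span {X (Sum.inl i.castSucc) - X (Sum.inl (Fin.last n)),
    X (Sum.inr i.castSucc) - X (Sum.inr (Fin.last n))}

/-!
The automorphism `xᵢ ↦ xᵢ - x_n`, `yᵢ ↦ yᵢ - y_n` (`i < n`) carries the monomial ideals
`(xᵢ, yᵢ)` onto the `𝒥_{i,n}` and preserves products and intersections of ideals. The `(xᵢ, yᵢ)`
are generated by pairwise disjoint sets of variables, and for such ideals every monomial of a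
polynomial in the intersection contains a variable from each set; these variables are distinct,
so the monomial is divisible by their product, which lies in the product of the ideals.
-/

namespace Ideal

variable {R S ι : Type*} [CommRing R] [CommRing S] [Fintype ι]

theorem prod_map_eq_iInf_map_of_prod_eq_iInf (e : R ≃+* S) {I : ι → Ideal R}
    (h : ∏ i, I i = ⨅ i, I i) : ∏ i, (I i).map e = ⨅ i, (I i).map e := by
  calc ∏ i, (I i).map e = (∏ i, I i).map e := (map_prod (mapHom (e : R →+* S)) I _).symm
    _ = (⨅ i, I i).map e := by rw [h]
    _ = ⨅ i, (I i).map e := by simp only [← comap_symm, comap_iInf]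

end Ideal

namespace MvPolynomial

open Function

section MonomialIdeal

variable {σ R ι : Type*} [CommSemiring R] [Fintype ι]

theorem monomial_mem_prod_span_X_image {s : ι → Set σ} (hs : Pairwise (Disjoint on s))
    {m : σ →₀ ℕ} (hm : ∀ i, ∃ v ∈ s i, m v ≠ 0) (c : R) :
    monomial m c ∈ ∏ i, Ideal.span (X '' s i : Set (MvPolynomial σ R)) := by
  classical
  choose v hvs hvm using hm
  have hv : Injective v := fun i j hij =>
    hs.eq (Set.not_disjoint_iff.mpr ⟨v i, hvs i, hij ▸ hvs j⟩)
  let t := Finset.univ.map ⟨v, hv⟩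
  have ht : t ⊆ m.support := by
    simpa [t, Finset.map_subset_iff_subset_preimage, Finset.subset_iff] using hvm
  rw [monomial_eq, Finsupp.prod, ← Finset.prod_sdiff ht, Finset.prod_map]
  refine Ideal.mul_mem_left _ _ (Ideal.mul_mem_left _ _ (Ideal.prod_mem_prod fun i _ => ?_))
  exact Ideal.pow_mem_of_mem _ (Ideal.subset_span (Set.mem_image_of_mem X (hvs i))) _
    (Nat.pos_of_ne_zero (hvm i))

theorem iInf_span_X_image_le_prod {s : ι → Set σ} (hs : Pairwise (Disjoint on s)) :
    ⨅ i, Ideal.span (X '' s i : Set (MvPolynomial σ R)) ≤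
      ∏ i, Ideal.span (X '' s i : Set (MvPolynomial σ R)) := by
  intro f hf
  simp only [Ideal.mem_iInf, mem_ideal_span_X_image] at hf
  rw [f.as_sum]
  exact Ideal.sum_mem _ fun m hm => monomial_mem_prod_span_X_image hs (fun i => hf i m hm) _

theorem prod_span_X_image_eq_iInf {s : ι → Set σ} (hs : Pairwise (Disjoint on s)) :
    ∏ i, Ideal.span (X '' s i : Set (MvPolynomial σ R)) =
      ⨅ i, Ideal.span (X '' s i : Set (MvPolynomial σ R)) := by
  refine le_antisymm ?_ (iInf_span_X_image_le_prod hs)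
  exact Ideal.prod_le_inf.trans_eq (Finset.inf_univ_eq_iInf _)

end MonomialIdeal

section Shear

variable {σ R : Type*} [CommRing R] [DecidableEq σ] (τ : σ → σ)

noncomputable def shear (c : R) : MvPolynomial σ R →ₐ[R] MvPolynomial σ R :=
  aeval fun v => if τ v = v then X v else X v + C c * X (τ v)

variable {τ}

theorem shear_X_of_eq {v : σ} (h : τ v = v) (c : R) : shear τ c (X v) = X v := by
  simp [shear, h]

theorem shear_X_of_ne {v : σ} (h : τ v ≠ v) (c : R) :
    shear τ c (X v) = X v + C c * X (τ v) := by
  simp [shear, h]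

theorem shear_zero : shear τ (0 : R) = AlgHom.id R _ := by
  refine algHom_ext fun v => ?_
  simp [shear]

theorem shear_comp_shear (hτ : ∀ v, τ (τ v) = τ v) (c d : R) :
    (shear τ c).comp (shear τ d) = shear τ (c + d) := by
  refine algHom_ext fun v => ?_
  by_cases h : τ v = v
  · simp [shear_X_of_eq h]
  · simp only [AlgHom.comp_apply, shear_X_of_ne h, map_add, map_mul, algHom_C,
      shear_X_of_eq (hτ v), algebraMap_eq]
    ring

noncomputable def shearEquiv (hτ : ∀ v, τ (τ v) = τ v) (c : R) :
    MvPolynomial σ R ≃ₐ[R] MvPolynomial σ R :=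
  AlgEquiv.ofAlgHom (shear τ c) (shear τ (-c))
    (by rw [shear_comp_shear hτ, add_neg_cancel, shear_zero])
    (by rw [shear_comp_shear hτ, neg_add_cancel, shear_zero])

theorem shearEquiv_apply (hτ : ∀ v, τ (τ v) = τ v) (c : R) (f : MvPolynomial σ R) :
    shearEquiv hτ c f = shear τ c f := rfl

end Shear

end MvPolynomial

def toLastVar (n : ℕ) : Fin (n + 1) ⊕ Fin (n + 1) → Fin (n + 1) ⊕ Fin (n + 1) :=
  Sum.map (fun _ => Fin.last n) (fun _ => Fin.last n)

theorem toLastVar_toLastVar (n : ℕ) (v : Fin (n + 1) ⊕ Fin (n + 1)) :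
    toLastVar n (toLastVar n v) = toLastVar n v := by
  cases v <;> rfl

theorem Jin_eq_map_span_X (n : ℕ) (i : Fin n) :
    Jin n i = Ideal.map (shearEquiv (toLastVar_toLastVar n) (-1 : ℚ) : JMring n ≃+* JMring n)
      (Ideal.span (X '' {Sum.inl i.castSucc, Sum.inr i.castSucc})) := by
  have hi := (Fin.castSucc_lt_last i).ne'
  have hx : toLastVar n (Sum.inl i.castSucc) ≠ Sum.inl i.castSucc := by simpa [toLastVar] using hi
  have hy : toLastVar n (Sum.inr i.castSucc) ≠ Sum.inr i.castSucc := by simpa [toLastVar] using hi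
  rw [Ideal.map_span, Set.image_image, Set.image_pair]
  simp only [AlgEquiv.coe_ringEquiv, shearEquiv_apply, shear_X_of_ne hx, shear_X_of_ne hy]
  simp [Jin, toLastVar, sub_eq_add_neg]

/-- In `ℚ[x₁,…,x_n,y₁,…,y_n]`, the product of the ideals `𝒥_{i,n} = (xᵢ-x_n, yᵢ-y_n)`
for `i = 1, …, n-1` equals their intersection. -/
theorem prod_Jin_eq_inf (n : ℕ) :
    ∏ i : Fin n, Jin n i = ⨅ i : Fin n, Jin n i := by
  simp only [Jin_eq_map_span_X]
  refine Ideal.prod_map_eq_iInf_map_of_prod_eq_iInf _ (prod_span_X_image_eq_iInf fun i j hij => ?_)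
  simp [Function.onFun, hij.symm]
end
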